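/- Suppose the digraph of W is strongly connected and structurally balanced with gauge g for the full node set. Then for every closed-loop trajectory (x, ς, s) of the prescribed-time sliding mode protocol with data (ρ1, ρ2, T_r, T_s, μ1, μ2, μ3, δ, d), there exists c ∈ ℝ such that x t k = c · g k for all nodes k and all t ≥ T_r + T_s (prescribed-time bipartite consensus within the preassigned time T_r + T_s despite the disturbances). -/

import Mathlib

open Matrix

/-- Time-varying gain: `μ_T(t) = κ/(T − t)` for `0 ≤ t < T`, `0` otherwise. -/
noncomputable def gain (κ T t : ℝ) : ℝ := if 0 ≤ t ∧ t < T then κ / (T - t) else 0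

/-- Signed Laplacian `L = D − W` with `D k k = ∑_l |W k l|`. -/
noncomputable def sLap {N : ℕ} (W : Matrix (Fin N) (Fin N) ℝ) : Matrix (Fin N) (Fin N) ℝ :=
  Matrix.diagonal (fun k => ∑ l, |W k l|) - W

/-- Node `i` reaches node `j`: reflexive–transitive closure of the edge relation
`E i j ↔ W j i ≠ 0`. -/
def Reaches {N : ℕ} (W : Matrix (Fin N) (Fin N) ℝ) : Fin N → Fin N → Prop :=
  Relation.ReflTransGen (fun i j => W j i ≠ 0)

def StronglyConnected {N : ℕ} (W : Matrix (Fin N) (Fin N) ℝ) : Prop :=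
  ∀ i j, Reaches W i j

def QuasiStronglyConnected {N : ℕ} (W : Matrix (Fin N) (Fin N) ℝ) : Prop :=
  ∃ r, ∀ j, Reaches W r j

def WeaklyConnected {N : ℕ} (W : Matrix (Fin N) (Fin N) ℝ) : Prop :=
  ∀ i j, Relation.ReflTransGen (fun a b => W b a ≠ 0 ∨ W a b ≠ 0) i j

/-- `k` is a leader: every node reaching `k` is reached back by `k`. -/
def IsLeader {N : ℕ} (W : Matrix (Fin N) (Fin N) ℝ) (k : Fin N) : Prop :=
  ∀ j, Reaches W j k → Reaches W k j

/-- Closed strong component of a leader `k`. -/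
def CSC {N : ℕ} (W : Matrix (Fin N) (Fin N) ℝ) (k : Fin N) : Set (Fin N) :=
  {j | Reaches W j k ∧ Reaches W k j}

/-- A gauge for a node set `S`. -/
def IsGauge {N : ℕ} (W : Matrix (Fin N) (Fin N) ℝ) (S : Set (Fin N)) (g : Fin N → ℝ) : Prop :=
  (∀ k ∈ S, g k = 1 ∨ g k = -1) ∧ ∀ k ∈ S, ∀ l ∈ S, g k * W k l * g l = |W k l|

/-- Nominal prescribed-time trajectory of the protocol (4). -/
def NominalTraj {N : ℕ} (W : Matrix (Fin N) (Fin N) ℝ) (κ ρ1 ρ2 T1 : ℝ)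
    (X : ℝ → Fin N → ℝ) : Prop :=
  Continuous X ∧
  ∀ t : ℝ, 0 ≤ t → t ≠ T1 →
    HasDerivAt X ((-(ρ1 + ρ2 * gain κ T1 t)) • (sLap W).mulVec (X t)) t

/-- Closed-loop trajectory of the prescribed-time sliding mode protocol (47)-(48):
`x` states, `ς` auxiliary variable (σ = x + ς), `s` a Filippov selection of sign(σ),
`d` the disturbances. -/
def SMCTraj {N : ℕ} (W : Matrix (Fin N) (Fin N) ℝ) (κ ρ1 ρ2 Tr Ts μ1 μ2 μ3 : ℝ)
    (d x ς s : ℝ → Fin N → ℝ) : Prop :=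
  Continuous x ∧ Continuous ς ∧
  (∀ t k, |s t k| ≤ 1 ∧ s t k * (x t k + ς t k) = |x t k + ς t k|) ∧
  ∀ t : ℝ, 0 ≤ t → t ≠ Tr → t ≠ Tr + Ts →
    (HasDerivAt ς ((ρ1 + ρ2 * gain κ (Tr + Ts) t) • (sLap W).mulVec (x t)) t ∧
     ∀ k, HasDerivAt (fun τ => x τ k)
       (-(ρ1 + ρ2 * gain κ (Tr + Ts) t) * ((sLap W).mulVec (x t)) k
         - μ1 * s t k - (μ2 + μ3 * gain κ Tr t) * (x t k + ς t k) + d t k) t)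


/-!
On `[0, Tr)` the sliding variable `σ = x + ς` satisfies `d/dt σₖ² ≤ -2 μ3 κ / (Tr - t) · σₖ²`,
because the switching gain `μ1` dominates the disturbance. If `σₖ(Tr) ≠ 0`, integrating this
bound drives `σₖ²` to `-∞` as `t → Tr`, contradicting continuity; so `σ(Tr) = 0`, and `σ` stays
zero afterwards. Hence `x = -ς` on `(Tr, ∞)`, i.e. `x` follows `ẋ = -(ρ1 + ρ2 μ_T) L x`. The same
blow-up argument, applied to the components of `L x` near `T = Tr + Ts`, gives `L x(T) = 0`;
then `x(T)` is an equilibrium of `ẋ = -ρ1 L x`, so `x` is constant after `T` by uniqueness.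
Finally, in the gauge coordinates `gₖ xₖ` the signed Laplacian becomes an unsigned one, whose
kernel on a strongly connected digraph consists of constants by the maximum principle.
-/

open Filter Set Topology

theorem tendsto_atBot_of_hasDerivAt_le_neg_div {φ : ℝ → ℝ} {T a : ℝ} (ha : 0 < a)
    (h : ∀ᶠ t in 𝓝[<] T, ∃ D, HasDerivAt φ D t ∧ D ≤ -a / (T - t)) :
    Tendsto φ (𝓝[<] T) atBot := by
  obtain ⟨t₀, ht₀ : t₀ < T, hsub⟩ := mem_nhdsLT_iff_exists_Ioo_subset.mp h
  set F : ℝ → ℝ := fun t => φ t - a * Real.log (T - t)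
  have hF : ∀ t ∈ Ioo t₀ T, ∃ D, HasDerivAt F D t ∧ D ≤ 0 := by
    intro t ht
    obtain ⟨D, hD, hDle⟩ := hsub ht
    have hTt : 0 < T - t := sub_pos.mpr ht.2
    have hlog := ((hasDerivAt_id' t).const_sub T).log hTt.ne'
    refine ⟨D + a / (T - t), (hD.sub (hlog.const_mul a)).congr_deriv (by ring), ?_⟩
    rw [neg_div] at hDle
    linarith
  have hanti : AntitoneOn F (Ioo t₀ T) := by
    refine antitoneOn_of_deriv_nonpos (convex_Ioo t₀ T) ?_ ?_ ?_
    · exact fun t ht => (hF t ht).choose_spec.1.continuousAt.continuousWithinAt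
    · rw [interior_Ioo]
      exact fun t ht => (hF t ht).choose_spec.1.differentiableAt.differentiableWithinAt
    · rw [interior_Ioo]
      intro t ht
      obtain ⟨D, hD, hDle⟩ := hF t ht
      rwa [hD.deriv]
  obtain ⟨t₁, ht₁⟩ : (Ioo t₀ T).Nonempty := nonempty_Ioo.mpr ht₀
  have hle : ∀ᶠ t in 𝓝[<] T, φ t ≤ F t₁ + a * Real.log (T - t) := by
    filter_upwards [Ioo_mem_nhdsLT ht₁.2] with t ht
    have := hanti ht₁ ⟨ht₁.1.trans ht.1, ht.2⟩ ht.1.le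
    simp only [F] at this ⊢
    linarith
  have hsub0 : Tendsto (fun t => T - t) (𝓝[<] T) (𝓝[>] 0) :=
    tendsto_nhdsWithin_of_tendsto_nhds_of_eventually_within _
      (((continuous_sub_left T).tendsto' T 0 (sub_self T)).mono_left nhdsWithin_le_nhds)
      (eventually_nhdsWithin_of_forall fun t (ht : t < T) => sub_pos.mpr ht)
  have hlog : Tendsto (fun t => a * Real.log (T - t)) (𝓝[<] T) atBot :=
    (Real.tendsto_log_nhdsGT_zero.comp hsub0).const_mul_atBot ha
  exact tendsto_atBot_mono' _ hle (tendsto_atBot_add_const_left _ _ hlog)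

theorem antitoneOn_Ici_of_hasDerivAt_nonpos_off {f : ℝ → ℝ} {a b : ℝ} (hf : Continuous f)
    (hf' : ∀ t, a < t → t ≠ b → ∃ D, HasDerivAt f D t ∧ D ≤ 0) : AntitoneOn f (Ici a) := by
  have hIcc : ∀ u v, a ≤ u → u ≤ v → b ∉ Ioo u v → f v ≤ f u := by
    intro u v hu huv hb
    have hder : ∀ t ∈ interior (Icc u v), ∃ D, HasDerivAt f D t ∧ D ≤ 0 := by
      rw [interior_Icc]
      exact fun t ht => hf' t (hu.trans_lt ht.1) fun htb => hb (htb ▸ ht)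
    refine antitoneOn_of_deriv_nonpos (convex_Icc u v) hf.continuousOn
      (fun t ht => (hder t ht).choose_spec.1.differentiableAt.differentiableWithinAt)
      (fun t ht => ?_) ⟨le_rfl, huv⟩ ⟨huv, le_rfl⟩ huv
    obtain ⟨D, hD, hDle⟩ := hder t ht
    rwa [hD.deriv]
  intro u hu v hv huv
  by_cases hb : b ∈ Ioo u v
  · exact (hIcc b v (hu.trans hb.1.le) hb.2.le (by simp)).trans
      (hIcc u b hu hb.1.le (by simp))
  · exact hIcc u v hu huv hb

theorem ODE_solution_eq_of_apply_eq_zero {E : Type*} [NormedAddCommGroup E] [NormedSpace ℝ E]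
    {v : E → E} {K : NNReal} (hv : LipschitzWith K v) {f : ℝ → E} {a : ℝ}
    (hf : ContinuousOn f (Ici a)) (hf' : ∀ t, a < t → HasDerivAt f (v (f t)) t)
    (ha : v (f a) = 0) {t : ℝ} (ht : a ≤ t) : f t = f a := by
  have hfa : ContinuousWithinAt f (Ioi a) a := (hf a self_mem_Ici).mono Ioi_subset_Ici_self
  have hderiv_a : HasDerivWithinAt f (v (f a)) (Ici a) a := by
    refine hasDerivWithinAt_Ici_of_tendsto_deriv
      (fun t ht => (hf' t ht).differentiableAt.differentiableWithinAt) hfa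
      self_mem_nhdsWithin ?_
    exact (hv.continuous.continuousAt.tendsto.comp hfa.tendsto).congr'
      (eventually_nhdsWithin_of_forall fun t ht => (hf' t ht).deriv.symm)
  refine ODE_solution_unique (v := fun _ => v) (fun _ => hv) (hf.mono Icc_subset_Ici_self)
    (fun s hs => ?_) continuousOn_const (fun s _ => ?_) rfl ⟨ht, le_rfl⟩
  · rcases hs.1.eq_or_lt with rfl | has
    · exact hderiv_a
    · exact (hf' s has).hasDerivWithinAt
  · simpa [ha] using hasDerivWithinAt_const s (Ici s) (f a)

theorem Matrix.mulVec_eq_zero_of_hasDerivAt_neg_div_smul {ι : Type*} [Fintype ι]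
    (M : Matrix ι ι ℝ) {X : ℝ → ι → ℝ} {T ρ c : ℝ} (hρ : 0 ≤ ρ) (hc : 0 < c)
    (hX : Continuous X)
    (hX' : ∀ᶠ t in 𝓝[<] T, HasDerivAt X (-(ρ + c / (T - t)) • M *ᵥ X t) t) :
    M *ᵥ X T = 0 := by
  have hnonpos : ∀ Y : ℝ → ι → ℝ, Continuous Y →
      (∀ᶠ t in 𝓝[<] T, HasDerivAt Y (-(ρ + c / (T - t)) • M *ᵥ Y t) t) →
      ∀ k, (M *ᵥ Y T) k ≤ 0 := by
    intro Y hY hY' k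
    by_contra! hpos
    have hMY : Continuous fun t => (M *ᵥ Y t) k :=
      (continuous_apply k).comp (continuous_const.matrix_mulVec hY)
    refine not_tendsto_nhds_of_tendsto_atBot
      (tendsto_atBot_of_hasDerivAt_le_neg_div (φ := fun t => Y t k)
        (a := c * ((M *ᵥ Y T) k / 2)) (by positivity) ?_) _
      (((continuous_apply k).comp hY).tendsto T |>.mono_left nhdsWithin_le_nhds)
    filter_upwards [hY', self_mem_nhdsWithin,
      nhdsWithin_le_nhds (hMY.continuousAt.eventually (lt_mem_nhds (half_lt_self hpos)))]
      with t hder (ht : t < T) hz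
    refine ⟨_, hasDerivAt_pi.mp hder k, ?_⟩
    have hTt : 0 < T - t := sub_pos.mpr ht
    simp only [Pi.smul_apply, smul_eq_mul, div_eq_mul_inv]
    nlinarith [mul_pos hc (inv_pos.mpr hTt), mul_nonneg hρ ((half_pos hpos).le.trans hz.le)]
  funext k
  refine le_antisymm (hnonpos X hX hX' k) ?_
  have := hnonpos (-X) hX.neg
    (hX'.mono fun t h => by simpa [Matrix.mulVec_neg] using h.neg) k
  simpa [Matrix.mulVec_neg] using this

theorem IsGauge.mul_sLap_mulVec {N : ℕ} {W : Matrix (Fin N) (Fin N) ℝ} {g : Fin N → ℝ}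
    (hg : IsGauge W Set.univ g) (v : Fin N → ℝ) (k : Fin N) :
    g k * (sLap W *ᵥ v) k = ∑ l, |W k l| * (g k * v k - g l * v l) := by
  have hgW : ∀ l, g k * W k l = |W k l| * g l := fun l => by
    have hsq : g l * g l = 1 := by rcases hg.1 l (mem_univ l) with h | h <;> rw [h] <;> norm_num
    linear_combination (g l) * hg.2 k (mem_univ k) l (mem_univ l) - (g k * W k l) * hsq
  rw [sLap, sub_mulVec, Pi.sub_apply, mulVec_diagonal, Finset.sum_mul, mulVec, dotProduct,
    mul_sub, Finset.mul_sum, Finset.mul_sum, ← Finset.sum_sub_distrib]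
  refine Finset.sum_congr rfl fun l _ => ?_
  linear_combination (-(v l)) * hgW l

theorem StronglyConnected.eq_of_sum_abs_mul_sub_eq_zero {N : ℕ} {W : Matrix (Fin N) (Fin N) ℝ}
    (hSC : StronglyConnected W) {u : Fin N → ℝ} (hu : ∀ k, ∑ l, |W k l| * (u k - u l) = 0)
    (i j : Fin N) : u i = u j := by
  obtain ⟨m, -, hm⟩ := Finset.exists_max_image Finset.univ u ⟨i, Finset.mem_univ i⟩
  have hmax_closed : ∀ a b, u b = u m → W b a ≠ 0 → u a = u m := by
    intro a b hb hba
    have hnonneg : ∀ l ∈ Finset.univ, 0 ≤ |W b l| * (u b - u l) := fun l _ =>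
      mul_nonneg (abs_nonneg _) (by rw [hb]; linarith [hm l (Finset.mem_univ l)])
    have := (Finset.sum_eq_zero_iff_of_nonneg hnonneg).mp (hu b) a (Finset.mem_univ a)
    rcases mul_eq_zero.mp this with h | h
    · exact absurd (abs_eq_zero.mp h) hba
    · linarith
  have hall : ∀ a, u a = u m := fun a => by
    induction hSC a m using Relation.ReflTransGen.head_induction_on with
    | refl => rfl
    | head hab _ ih => exact hmax_closed _ _ ih hab
  rw [hall i, hall j]

theorem exists_eq_mul_gauge_of_sLap_mulVec_eq_zero {N : ℕ} {W : Matrix (Fin N) (Fin N) ℝ}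
    (hSC : StronglyConnected W) {g : Fin N → ℝ} (hg : IsGauge W Set.univ g) {v : Fin N → ℝ}
    (hv : sLap W *ᵥ v = 0) : ∃ c : ℝ, ∀ k, v k = c * g k := by
  rcases isEmpty_or_nonempty (Fin N) with hN | ⟨⟨i⟩⟩
  · exact ⟨0, isEmptyElim⟩
  have hconst := hSC.eq_of_sum_abs_mul_sub_eq_zero (u := fun k => g k * v k)
    fun k => by rw [← hg.mul_sLap_mulVec, hv, Pi.zero_apply, mul_zero]
  refine ⟨g i * v i, fun k => ?_⟩
  rw [← hconst k i]
  rcases hg.1 k (mem_univ k) with h | h <;> rw [h] <;> ring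

theorem gain_of_mem_Ico {κ T t : ℝ} (h₀ : 0 ≤ t) (hT : t < T) : gain κ T t = κ / (T - t) :=
  if_pos ⟨h₀, hT⟩

theorem gain_of_le {κ T t : ℝ} (hT : T ≤ t) : gain κ T t = 0 :=
  if_neg fun h => hT.not_gt h.2

namespace SMCTraj

variable {N : ℕ} {W : Matrix (Fin N) (Fin N) ℝ} {κ ρ1 ρ2 Tr Ts μ1 μ2 μ3 δ : ℝ}
  {d x ς s : ℝ → Fin N → ℝ}

theorem continuous_sq_sigma (htraj : SMCTraj W κ ρ1 ρ2 Tr Ts μ1 μ2 μ3 d x ς s) (k : Fin N) :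
    Continuous fun τ => (x τ k + ς τ k) ^ 2 :=
  (((continuous_apply k).comp htraj.1).add ((continuous_apply k).comp htraj.2.1)).pow 2

theorem hasDerivAt_sq_sigma_le (htraj : SMCTraj W κ ρ1 ρ2 Tr Ts μ1 μ2 μ3 d x ς s)
    (hd : ∀ t : ℝ, 0 ≤ t → ∀ k, |d t k| ≤ δ) (hμ1 : δ ≤ μ1) {t : ℝ} (h₀ : 0 ≤ t)
    (hTr : t ≠ Tr) (hT : t ≠ Tr + Ts) (k : Fin N) :
    ∃ D, HasDerivAt (fun τ => (x τ k + ς τ k) ^ 2) D t ∧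
      D ≤ -2 * (μ2 + μ3 * gain κ Tr t) * (x t k + ς t k) ^ 2 := by
  obtain ⟨-, -, hs, hode⟩ := htraj
  obtain ⟨hς', hx'⟩ := hode t h₀ hTr hT
  set σ := x t k + ς t k
  refine ⟨2 * σ * (-(μ1 * s t k) - (μ2 + μ3 * gain κ Tr t) * σ + d t k),
    (((hx' k).fun_add (hasDerivAt_pi.mp hς' k)).fun_pow 2).congr_deriv ?_, ?_⟩
  · simp only [Pi.smul_apply, smul_eq_mul]
    ring
  have hdσ : d t k * σ ≤ μ1 * |σ| := calc
    d t k * σ ≤ |d t k| * |σ| := by rw [← abs_mul]; exact le_abs_self _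
    _ ≤ μ1 * |σ| := mul_le_mul_of_nonneg_right ((hd t h₀ k).trans hμ1) (abs_nonneg σ)
  have hsσ : s t k * σ = |σ| := (hs t k).2
  calc 2 * σ * (-(μ1 * s t k) - (μ2 + μ3 * gain κ Tr t) * σ + d t k)
      = -2 * (μ2 + μ3 * gain κ Tr t) * σ ^ 2 + 2 * (d t k * σ - μ1 * (s t k * σ)) := by ring
    _ ≤ -2 * (μ2 + μ3 * gain κ Tr t) * σ ^ 2 := by rw [hsσ]; linarith

theorem sigma_eq_zero_at_reaching_time (htraj : SMCTraj W κ ρ1 ρ2 Tr Ts μ1 μ2 μ3 d x ς s)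
    (hd : ∀ t : ℝ, 0 ≤ t → ∀ k, |d t k| ≤ δ) (hμ1 : δ ≤ μ1) (hTr : 0 < Tr) (hTs : 0 < Ts)
    (hκ : 0 < κ) (hμ2 : 0 ≤ μ2) (hμ3 : 0 < μ3) : x Tr + ς Tr = 0 := by
  funext k
  by_contra hne
  have ha : 0 < (x Tr k + ς Tr k) ^ 2 := sq_pos_of_ne_zero hne
  have hcont := htraj.continuous_sq_sigma k
  refine not_tendsto_nhds_of_tendsto_atBot
    (tendsto_atBot_of_hasDerivAt_le_neg_div (a := μ3 * κ * (x Tr k + ς Tr k) ^ 2)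
      (by positivity) ?_) _ ((hcont.tendsto Tr).mono_left nhdsWithin_le_nhds)
  filter_upwards [Ioo_mem_nhdsLT hTr,
    nhdsWithin_le_nhds (hcont.continuousAt.eventually (lt_mem_nhds (half_lt_self ha)))]
    with t ht hσ
  obtain ⟨D, hD, hDle⟩ :=
    htraj.hasDerivAt_sq_sigma_le hd hμ1 ht.1.le ht.2.ne (by linarith [ht.2]) k
  refine ⟨D, hD, hDle.trans ?_⟩
  have hTt : 0 < Tr - t := sub_pos.mpr ht.2
  rw [gain_of_mem_Ico ht.1.le ht.2, div_eq_mul_inv, neg_div, div_eq_mul_inv]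
  nlinarith [mul_pos (mul_pos hμ3 hκ) (inv_pos.mpr hTt),
    mul_nonneg hμ2 (sq_nonneg (x t k + ς t k))]

theorem sigma_eq_zero_of_le (htraj : SMCTraj W κ ρ1 ρ2 Tr Ts μ1 μ2 μ3 d x ς s)
    (hd : ∀ t : ℝ, 0 ≤ t → ∀ k, |d t k| ≤ δ) (hμ1 : δ ≤ μ1) (hTr : 0 < Tr) (hTs : 0 < Ts)
    (hκ : 0 < κ) (hμ2 : 0 ≤ μ2) (hμ3 : 0 < μ3) {t : ℝ} (ht : Tr ≤ t) : x t + ς t = 0 := by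
  funext k
  have hanti : AntitoneOn (fun τ => (x τ k + ς τ k) ^ 2) (Ici Tr) := by
    refine antitoneOn_Ici_of_hasDerivAt_nonpos_off (b := Tr + Ts) (htraj.continuous_sq_sigma k)
      fun τ hτ hτT => ?_
    obtain ⟨D, hD, hDle⟩ := htraj.hasDerivAt_sq_sigma_le hd hμ1 (hTr.trans hτ).le hτ.ne' hτT k
    refine ⟨D, hD, hDle.trans ?_⟩
    rw [gain_of_le hτ.le]
    nlinarith [sq_nonneg (x τ k + ς τ k)]
  have hσTr : x Tr k + ς Tr k = 0 :=
    congrFun (htraj.sigma_eq_zero_at_reaching_time hd hμ1 hTr hTs hκ hμ2 hμ3) k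
  have h := hanti self_mem_Ici ht ht
  dsimp only at h
  rw [hσTr, zero_pow two_ne_zero] at h
  exact pow_eq_zero_iff two_ne_zero |>.mp (le_antisymm h (sq_nonneg _))

theorem hasDerivAt_of_reaching_time_lt (htraj : SMCTraj W κ ρ1 ρ2 Tr Ts μ1 μ2 μ3 d x ς s)
    (hσ : ∀ t, Tr ≤ t → x t + ς t = 0) (hTr : 0 ≤ Tr) {t : ℝ} (ht : Tr < t)
    (hT : t ≠ Tr + Ts) :
    HasDerivAt x (-(ρ1 + ρ2 * gain κ (Tr + Ts) t) • sLap W *ᵥ x t) t := by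
  have hx : x =ᶠ[𝓝 t] -ς := by
    filter_upwards [Ioi_mem_nhds ht] with τ hτ
    exact eq_neg_of_add_eq_zero_left (hσ τ hτ.le)
  rw [neg_smul]
  exact ((htraj.2.2.2 t (hTr.trans ht.le) ht.ne' hT).1.neg).congr_of_eventuallyEq hx

end SMCTraj

theorem smc_prescribed_time_bipartite_consensus_strong_general
    {N : ℕ} (W : Matrix (Fin N) (Fin N) ℝ)
    (hSC : StronglyConnected W)
    (g : Fin N → ℝ) (hg : IsGauge W Set.univ g)
    (κ ρ1 ρ2 Tr Ts μ1 μ2 μ3 δ : ℝ) (hκ : 2 < κ)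
    (hρ1 : 0 < ρ1) (hρ2 : 0 < ρ2) (hTr : 0 < Tr) (hTs : 0 < Ts)
    (hμ2 : 0 < μ2) (hμ3 : 0 < μ3) (hμ1 : δ < μ1)
    (d : ℝ → Fin N → ℝ) (hd : ∀ t : ℝ, 0 ≤ t → ∀ k, |d t k| ≤ δ)
    (x ς s : ℝ → Fin N → ℝ)
    (htraj : SMCTraj W κ ρ1 ρ2 Tr Ts μ1 μ2 μ3 d x ς s) :
    ∃ c : ℝ, ∀ t : ℝ, Tr + Ts ≤ t → ∀ k, x t k = c * g k := by
  have hκ₀ : 0 < κ := by linarith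
  have hT : Tr < Tr + Ts := by linarith
  have hσ : ∀ t, Tr ≤ t → x t + ς t = 0 := fun t =>
    htraj.sigma_eq_zero_of_le hd hμ1.le hTr hTs hκ₀ hμ2.le hμ3
  have hx' := fun t => htraj.hasDerivAt_of_reaching_time_lt hσ hTr.le (t := t)
  have hLx : sLap W *ᵥ x (Tr + Ts) = 0 := by
    refine (sLap W).mulVec_eq_zero_of_hasDerivAt_neg_div_smul hρ1.le (mul_pos hρ2 hκ₀)
      htraj.1 ?_
    filter_upwards [Ioo_mem_nhdsLT hT] with t ht
    simpa only [gain_of_mem_Ico (hTr.trans ht.1).le ht.2, mul_div_assoc] using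
      hx' t ht.1 ht.2.ne
  have hconst : ∀ t, Tr + Ts ≤ t → x t = x (Tr + Ts) := fun t ht =>
    ODE_solution_eq_of_apply_eq_zero (v := fun y => -ρ1 • sLap W *ᵥ y)
      (LinearMap.toContinuousLinearMap (-ρ1 • (sLap W).mulVecLin)).lipschitz
      htraj.1.continuousOn
      (fun t ht => by simpa [gain_of_le ht.le] using hx' t (hT.trans ht) ht.ne')
      (by simp [hLx]) ht
  obtain ⟨c, hc⟩ := exists_eq_mul_gauge_of_sLap_mulVec_eq_zero hSC hg hLx
  exact ⟨c, fun t ht k => by rw [hconst t ht, hc]⟩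

theorem smc_prescribed_time_bipartite_consensus_strong
    {N : ℕ} (hN : 2 ≤ N) (W : Matrix (Fin N) (Fin N) ℝ)
    (hdiag : ∀ k, W k k = 0)
    (hSC : StronglyConnected W)
    (g : Fin N → ℝ) (hg : IsGauge W Set.univ g)
    (κ ρ1 ρ2 Tr Ts μ1 μ2 μ3 δ : ℝ) (hκ : 2 < κ)
    (hρ1 : 0 < ρ1) (hρ2 : 0 < ρ2) (hTr : 0 < Tr) (hTs : 0 < Ts)
    (hμ2 : 0 < μ2) (hμ3 : 0 < μ3) (hδ : 0 ≤ δ) (hμ1 : δ < μ1)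
    (d : ℝ → Fin N → ℝ) (hd : ∀ t : ℝ, 0 ≤ t → ∀ k, |d t k| ≤ δ)
    (x ς s : ℝ → Fin N → ℝ)
    (htraj : SMCTraj W κ ρ1 ρ2 Tr Ts μ1 μ2 μ3 d x ς s) :
    ∃ c : ℝ, ∀ t : ℝ, Tr + Ts ≤ t → ∀ k, x t k = c * g k :=
  smc_prescribed_time_bipartite_consensus_strong_general W hSC g hg κ ρ1 ρ2 Tr Ts μ1 μ2 μ3 δ hκ hρ1
    hρ2 hTr hTs hμ2 hμ3 hμ1 d hd x ς s htraj
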